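/- Let a, b, c ∈ ℝ² be affinely independent points such that the triangle T := conv{a, b, c} has no obtuse angle, i.e. ⟨b − a, c − a⟩ ≥ 0, ⟨a − b, c − b⟩ ≥ 0 and ⟨a − c, b − c⟩ ≥ 0. Write r = r(T), w = w(T), D = D(T), R = R(T). Then w·D = 2·r·( D + (2·r·R/D)·( 1 + √(1 − (D/(2R))²) ) ), i.e. every acute (non-obtuse) triangle satisfies the inequality w ≤ 2r(1 + (2rR/D²)(1 + √(1 − (D/2R)²))) with equality. -/

import Mathlib

/-!
Let `Δ = |det (b - a, c - a)|` be twice the area of the triangle `T`. All four functionals of `T`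
are explicit. The diameter `D` is the longest side. The width is the smallest altitude `Δ / D`:
in a direction `u`, the vertex lying in the middle for `⟪u, ·⟫` is joined to the opposite side by
a chord orthogonal to `u` of length at most `D`, which splits `T` into two triangles and gives
`Δ ≤ D · breadth_u`; the direction orthogonal to the longest side attains this. The inradius is
`Δ` divided by the perimeter, attained at the incenter. Since no angle is obtuse the circumcenter
lies in `T`, so the smallest enclosing ball is the circumscribed one and `R` is the product of the
sides over `2Δ`. Then `√(1 - (D / 2R)²)` is the cosine of the angle opposite the longest side, and
the identity becomes Heron's formula.
-/

open Metric Set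
open scoped RealInnerProductSpace

/-- The diameter of a set. -/
noncomputable def sDiam {n : ℕ} (K : Set (EuclideanSpace ℝ (Fin n))) : ℝ :=
  Metric.diam K

/-- The circumradius: radius of the smallest enclosing closed ball. -/
noncomputable def circumradius {n : ℕ} (K : Set (EuclideanSpace ℝ (Fin n))) : ℝ :=
  sInf {ρ : ℝ | 0 ≤ ρ ∧ ∃ c, K ⊆ Metric.closedBall c ρ}

/-- The inradius: radius of a largest inscribed closed ball. -/
noncomputable def inradius {n : ℕ} (K : Set (EuclideanSpace ℝ (Fin n))) : ℝ :=
  sSup {ρ : ℝ | 0 ≤ ρ ∧ ∃ c, Metric.closedBall c ρ ⊆ K}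

/-- The (minimal) width: the smallest breadth over all directions. -/
noncomputable def width {n : ℕ} (K : Set (EuclideanSpace ℝ (Fin n))) : ℝ :=
  sInf {b : ℝ | ∃ u : EuclideanSpace ℝ (Fin n), ‖u‖ = 1 ∧
    b = sSup ((fun x => (inner ℝ u x : ℝ)) '' K) - sInf ((fun x => (inner ℝ u x : ℝ)) '' K)}

section InnerProductSpace

variable {E : Type*} [NormedAddCommGroup E] [InnerProductSpace ℝ E]

noncomputable def breadth (K : Set E) (u : E) : ℝ :=
  sSup ((fun x => ⟪u, x⟫) '' K) - sInf ((fun x => ⟪u, x⟫) '' K)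

lemma inner_sub_inner_le_breadth {K : Set E} (hK : Bornology.IsBounded K) (u : E) {x y : E}
    (hx : x ∈ K) (hy : y ∈ K) : ⟪u, y⟫ - ⟪u, x⟫ ≤ breadth K u := by
  have hbdd := (innerSL ℝ u).lipschitz.isBounded_image hK
  exact sub_le_sub (le_csSup hbdd.bddAbove ⟨y, hy, rfl⟩) (csInf_le hbdd.bddBelow ⟨x, hx, rfl⟩)

lemma breadth_nonneg {K : Set E} (hK : Bornology.IsBounded K) (u : E) {x : E} (hx : x ∈ K) :
    0 ≤ breadth K u := by
  simpa using inner_sub_inner_le_breadth hK u hx hx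

lemma breadth_convexHull_le {s : Set E} (hs : s.Nonempty) {u : E} {m M : ℝ}
    (h : ∀ x ∈ s, ⟪u, x⟫ ∈ Icc m M) : breadth (convexHull ℝ s) u ≤ M - m := by
  have hsub : convexHull ℝ s ⊆ (fun x => ⟪u, x⟫) ⁻¹' Icc m M :=
    convexHull_min h ((convex_Icc m M).linear_preimage (innerₛₗ ℝ u))
  have hne : ((fun x => ⟪u, x⟫) '' convexHull ℝ s).Nonempty :=
    (hs.mono (subset_convexHull ℝ s)).image _
  have himg : (fun x => ⟪u, x⟫) '' convexHull ℝ s ⊆ Icc m M := image_subset_iff.2 hsub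
  exact sub_le_sub (csSup_le hne fun y hy => (himg hy).2) (le_csInf hne fun y hy => (himg hy).1)

lemma dist_eq_of_two_mul_inner_eq {a b O : E} (h : 2 * ⟪O - a, b - a⟫ = ‖b - a‖ ^ 2) :
    dist b O = dist a O := by
  rw [← sq_eq_sq₀ dist_nonneg dist_nonneg, dist_eq_norm, dist_eq_norm,
    ← sub_sub_sub_cancel_right b O a, norm_sub_sq_real, real_inner_comm, h, norm_sub_rev a O]
  ring

lemma dist_sq_le_of_inner_nonneg {a b c : E} (h : 0 ≤ ⟪b - a, c - a⟫) :
    dist b c ^ 2 ≤ dist a b ^ 2 + dist a c ^ 2 := by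
  rw [dist_comm a b, dist_comm a c, dist_eq_norm, dist_eq_norm, dist_eq_norm,
    ← sub_sub_sub_cancel_right b c a, norm_sub_sq_real]
  linarith

lemma inner_sub_sub_left_eq (a b c : E) : ⟪a - b, c - b⟫ = ‖b - a‖ ^ 2 - ⟪b - a, c - a⟫ := by
  rw [← sub_sub_sub_cancel_right c b a, inner_sub_right, ← neg_sub b a, inner_neg_left,
    inner_neg_left, real_inner_self_eq_norm_sq]
  ring

end InnerProductSpace

lemma width_eq_sInf_breadth {n : ℕ} (K : Set (EuclideanSpace ℝ (Fin n))) :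
    width K = sInf {b | ∃ u, ‖u‖ = 1 ∧ b = breadth K u} := rfl

lemma circumradius_convexHull_eq {n : ℕ} {s : Set (EuclideanSpace ℝ (Fin n))}
    {O : EuclideanSpace ℝ (Fin n)} {R : ℝ} (hs : s.Nonempty) (hO : O ∈ convexHull ℝ s)
    (hR : ∀ v ∈ s, dist v O = R) : circumradius (convexHull ℝ s) = R := by
  obtain ⟨v₀, hv₀⟩ := hs
  have hR0 : 0 ≤ R := hR v₀ hv₀ ▸ dist_nonneg
  refine IsLeast.csInf_eq ⟨⟨hR0, O, convexHull_min (fun v hv => ?_) (convex_closedBall O R)⟩, ?_⟩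
  · exact mem_closedBall.2 (hR v hv).le
  rintro ρ ⟨-, p, hp⟩
  -- minimum principle for `⟪p - O, ·⟫`: some `v ∈ s` lies on the far side of `O` from `p`
  obtain ⟨v, hv, hvO⟩ := ((innerₛₗ ℝ (p - O)).concaveOn convex_univ).exists_le_of_mem_convexHull
    (subset_univ s) hO
  have hvO' : ⟪v - O, p - O⟫ ≤ 0 := by
    rw [real_inner_comm, inner_sub_right, sub_nonpos]; exact hvO
  have hRv : R ^ 2 ≤ dist v p ^ 2 := by
    rw [dist_eq_norm, ← sub_sub_sub_cancel_right v p O, norm_sub_sq_real, ← dist_eq_norm,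
      hR v hv]
    nlinarith [sq_nonneg ‖p - O‖]
  exact (pow_le_pow_iff_left₀ hR0 dist_nonneg two_ne_zero).1 hRv |>.trans
    (mem_closedBall.1 (hp (subset_convexHull ℝ s hv)))

local notation "ℝ²" => EuclideanSpace ℝ (Fin 2)

def det2 (x y : ℝ²) : ℝ := x 0 * y 1 - x 1 * y 0

lemma inner_eq_coords (x y : ℝ²) : ⟪x, y⟫ = x 0 * y 0 + x 1 * y 1 := by
  simp [PiLp.inner_apply, Fin.sum_univ_two, mul_comm]

lemma norm_sq_eq_coords (x : ℝ²) : ‖x‖ ^ 2 = x 0 ^ 2 + x 1 ^ 2 := by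
  rw [← real_inner_self_eq_norm_sq, inner_eq_coords]; ring

lemma det2_swap (x y : ℝ²) : det2 y x = -det2 x y := by
  unfold det2; ring

lemma det2_self (x : ℝ²) : det2 x x = 0 := by
  unfold det2; ring

lemma det2_sub_rotate (a b c : ℝ²) : det2 (c - b) (a - b) = det2 (b - a) (c - a) := by
  simp only [det2, PiLp.sub_apply]; ring

lemma det2_sq_add_inner_sq (x y : ℝ²) : det2 x y ^ 2 + ⟪x, y⟫ ^ 2 = ‖x‖ ^ 2 * ‖y‖ ^ 2 := by
  rw [inner_eq_coords, norm_sq_eq_coords, norm_sq_eq_coords, det2]; ring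

lemma abs_det2_le (x y : ℝ²) : |det2 x y| ≤ ‖x‖ * ‖y‖ :=
  abs_le_of_sq_le_sq (by nlinarith [det2_sq_add_inner_sq x y, sq_nonneg ⟪x, y⟫]) (by positivity)

lemma det2_add_right (u x y : ℝ²) : det2 u (x + y) = det2 u x + det2 u y := by
  simp only [det2, PiLp.add_apply]; ring

lemma det2_sub_right (u x y : ℝ²) : det2 u (x - y) = det2 u x - det2 u y := by
  simp only [det2, PiLp.sub_apply]; ring

lemma det2_smul_right (u x : ℝ²) (t : ℝ) : det2 u (t • x) = t * det2 u x := by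
  simp only [det2, PiLp.smul_apply, smul_eq_mul]; ring

lemma isLinearMap_det2 (u : ℝ²) : IsLinearMap ℝ (det2 u) :=
  ⟨det2_add_right u, fun t x => det2_smul_right u x t⟩

lemma norm_sq_mul_det2 (u w v : ℝ²) :
    ‖u‖ ^ 2 * det2 w v = ⟪u, w⟫ * det2 u v - ⟪u, v⟫ * det2 u w := by
  rw [norm_sq_eq_coords, inner_eq_coords, inner_eq_coords]; unfold det2; ring

lemma det2_add_det2_add_det2 (a b c x : ℝ²) :
    det2 (b - a) (x - a) + det2 (c - b) (x - b) + det2 (a - c) (x - c) =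
      det2 (b - a) (c - a) := by
  simp only [det2, PiLp.sub_apply]; ring

lemma det2_smul_eq_add (a b c x : ℝ²) :
    det2 (b - a) (c - a) • x =
      det2 (c - b) (x - b) • a + det2 (a - c) (x - c) • b + det2 (b - a) (x - a) • c := by
  ext i; fin_cases i <;> simp [det2] <;> ring

lemma det2_sub_eq_mul {a b c x : ℝ²} {α β γ : ℝ} (hw : α + β + γ = 1)
    (hx : x = α • a + β • b + γ • c) : det2 (b - a) (x - a) = γ * det2 (b - a) (c - a) := by
  subst hx
  have hα : α = 1 - β - γ := by linarith
  subst hα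
  simp only [det2, PiLp.sub_apply, PiLp.add_apply, PiLp.smul_apply, smul_eq_mul]; ring

def perp (v : ℝ²) : ℝ² := !₂[-v 1, v 0]

lemma inner_perp (v x : ℝ²) : ⟪perp v, x⟫ = det2 v x := by
  rw [inner_eq_coords]; simp [perp, det2]; ring

lemma norm_perp (v : ℝ²) : ‖perp v‖ = ‖v‖ := by
  rw [← sq_eq_sq₀ (norm_nonneg _) (norm_nonneg _), norm_sq_eq_coords, norm_sq_eq_coords]
  simp [perp]; ring

lemma det2_perp (v : ℝ²) : det2 v (perp v) = ‖v‖ ^ 2 := by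
  rw [← inner_perp, real_inner_self_eq_norm_sq, norm_perp]

lemma abs_det2_le_of_inner_le_inner {u x y z : ℝ²} (hu : ‖u‖ = 1) {D : ℝ}
    (hyx : dist y x ≤ D) (hyz : dist y z ≤ D) (hxy : ⟪u, x⟫ ≤ ⟪u, y⟫)
    (hyz' : ⟪u, y⟫ ≤ ⟪u, z⟫) :
    |det2 (z - x) (y - x)| ≤ (⟪u, z⟫ - ⟪u, x⟫) * D := by
  set g := ⟪u, z - x⟫ with hg
  set β := ⟪u, y - x⟫ with hβ
  have hβ0 : 0 ≤ β := by rw [hβ, inner_sub_right]; linarith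
  have hβg : β ≤ g := by rw [hβ, hg, inner_sub_right, inner_sub_right]; linarith
  -- `q / g` goes to `y` from the point of `[x, z]` at the height `⟪u, y⟫`
  set q := g • (y - x) - β • (z - x)
  have hdet : det2 (z - x) (y - x) = det2 u q := by
    have := norm_sq_mul_det2 u (z - x) (y - x)
    rw [hu, one_pow, one_mul] at this
    rw [this, det2_sub_right u (g • _), det2_smul_right, det2_smul_right]
  have hq : ‖q‖ ≤ g * D := by
    have hq' : q = (g - β) • (y - x) + β • (y - z) := by module
    calc ‖q‖ ≤ ‖(g - β) • (y - x)‖ + ‖β • (y - z)‖ := hq' ▸ norm_add_le _ _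
      _ = (g - β) * dist y x + β * dist y z := by
          rw [norm_smul, norm_smul, Real.norm_of_nonneg (sub_nonneg.2 hβg),
            Real.norm_of_nonneg hβ0, dist_eq_norm, dist_eq_norm]
      _ ≤ (g - β) * D + β * D := by gcongr
      _ = g * D := by ring
  calc |det2 (z - x) (y - x)| ≤ ‖u‖ * ‖q‖ := hdet ▸ abs_det2_le u q
    _ ≤ (⟪u, z⟫ - ⟪u, x⟫) * D := by rw [hu, one_mul, ← inner_sub_right]; exact hq

lemma abs_det2_le_breadth_mul {u : ℝ²} (hu : ‖u‖ = 1) {D : ℝ} {a b c : ℝ²}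
    (hD : ∀ x ∈ ({a, b, c} : Set ℝ²), ∀ y ∈ ({a, b, c} : Set ℝ²), dist x y ≤ D) :
    |det2 (b - a) (c - a)| ≤ breadth (convexHull ℝ {a, b, c}) u * D := by
  wlog hab : ⟪u, a⟫ ≤ ⟪u, b⟫ generalizing a b c
  · have := this (a := b) (b := a) (c := c) (by rwa [Set.insert_comm]) (by linarith)
    rwa [Set.insert_comm, det2_swap, det2_sub_rotate, abs_neg] at this
  wlog hac : ⟪u, a⟫ ≤ ⟪u, c⟫ generalizing a b c
  · have := this (a := c) (b := a) (c := b) (by rwa [Set.insert_comm c a, Set.pair_comm c b])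
      (by linarith) (by linarith)
    rwa [Set.insert_comm c a, Set.pair_comm c b, det2_sub_rotate, det2_sub_rotate] at this
  wlog hbc : ⟪u, b⟫ ≤ ⟪u, c⟫ generalizing a b c
  · have := this (a := a) (b := c) (c := b) (by rwa [Set.pair_comm]) hac hab (le_of_not_ge hbc)
    rwa [Set.pair_comm, det2_swap, abs_neg] at this
  have hK : Bornology.IsBounded (convexHull ℝ ({a, b, c} : Set ℝ²)) :=
    isBounded_convexHull.2 (Set.toFinite _).isBounded
  have hmem : ∀ x ∈ ({a, b, c} : Set ℝ²), x ∈ convexHull ℝ {a, b, c} :=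
    fun x hx => subset_convexHull ℝ _ hx
  calc |det2 (b - a) (c - a)| = |det2 (c - a) (b - a)| := by rw [det2_swap, abs_neg]
    _ ≤ (⟪u, c⟫ - ⟪u, a⟫) * D :=
        abs_det2_le_of_inner_le_inner hu (hD b (by simp) a (by simp))
          (hD b (by simp) c (by simp)) hab hbc
    _ ≤ breadth (convexHull ℝ {a, b, c}) u * D := by
        gcongr
        · exact dist_self a ▸ hD a (by simp) a (by simp)
        · exact inner_sub_inner_le_breadth hK u (hmem a (by simp)) (hmem c (by simp))

lemma width_le_abs_det2_div_dist {a b : ℝ²} (hab : a ≠ b) (c : ℝ²) :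
    width (convexHull ℝ {a, b, c}) ≤ |det2 (b - a) (c - a)| / dist a b := by
  have hv : 0 < ‖b - a‖ := norm_pos_iff.2 (sub_ne_zero.2 hab.symm)
  set n : ℝ² := ‖b - a‖⁻¹ • perp (b - a)
  have hn : ‖n‖ = 1 := by
    rw [norm_smul, norm_perp, norm_inv, norm_norm, inv_mul_cancel₀ hv.ne']
  have hproj : ∀ x, ⟪n, x⟫ = ⟪n, a⟫ + ‖b - a‖⁻¹ * det2 (b - a) (x - a) := fun x => by
    rw [← sub_eq_iff_eq_add', ← inner_sub_right, real_inner_smul_left, inner_perp]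
  set t := ‖b - a‖⁻¹ * det2 (b - a) (c - a)
  have hK : Bornology.IsBounded (convexHull ℝ ({a, b, c} : Set ℝ²)) :=
    isBounded_convexHull.2 (Set.toFinite _).isBounded
  have hbdd : BddBelow {β | ∃ u, ‖u‖ = 1 ∧ β = breadth (convexHull ℝ {a, b, c}) u} :=
    ⟨0, by
      rintro _ ⟨u, -, rfl⟩
      exact breadth_nonneg hK u (subset_convexHull ℝ _ (mem_insert a _))⟩
  calc width (convexHull ℝ {a, b, c}) ≤ breadth (convexHull ℝ {a, b, c}) n :=
        csInf_le hbdd ⟨n, hn, rfl⟩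
    _ ≤ (⟪n, a⟫ + max 0 t) - (⟪n, a⟫ + min 0 t) := by
        refine breadth_convexHull_le (insert_nonempty _ _) ?_
        simp only [mem_insert_iff, mem_singleton_iff, forall_eq_or_imp, forall_eq]
        rw [hproj b, hproj c, det2_self]
        simp [t]
    _ = |det2 (b - a) (c - a)| / dist a b := by
        rw [add_sub_add_left_eq_sub, max_sub_min_eq_abs', zero_sub, abs_neg, abs_mul, abs_inv,
          abs_norm, dist_comm, dist_eq_norm, inv_mul_eq_div]

lemma width_convexHull_triple {a b c : ℝ²} (h : det2 (b - a) (c - a) ≠ 0) :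
    width (convexHull ℝ {a, b, c}) = |det2 (b - a) (c - a)| / diam ({a, b, c} : Set ℝ²) := by
  have hbdd : Bornology.IsBounded ({a, b, c} : Set ℝ²) := (Set.toFinite _).isBounded
  have hab : a ≠ b := by rintro rfl; simp [det2] at h
  have hD : 0 < diam ({a, b, c} : Set ℝ²) :=
    (dist_pos.2 hab).trans_le (dist_le_diam_of_mem hbdd (by simp) (by simp))
  apply le_antisymm
  · rw [diam_triple] at hD ⊢
    rcases max_choice (max (dist a b) (dist a c)) (dist b c) with hm | hm <;> rw [hm] at hD ⊢
    · rcases max_choice (dist a b) (dist a c) with hm' | hm' <;> rw [hm'] at hD ⊢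
      · exact width_le_abs_det2_div_dist hab c
      · have := width_le_abs_det2_div_dist (dist_pos.1 hD) b
        rwa [Set.pair_comm, det2_swap, abs_neg] at this
    · have := width_le_abs_det2_div_dist (dist_pos.1 hD) a
      rwa [Set.pair_comm c a, Set.insert_comm b a, det2_sub_rotate] at this
  · rw [width_eq_sInf_breadth]
    refine le_csInf ⟨_, EuclideanSpace.single 0 1, by simp, rfl⟩ ?_
    rintro _ ⟨u, hu, rfl⟩
    rw [div_le_iff₀ hD]
    exact abs_det2_le_breadth_mul hu fun x hx y hy => dist_le_diam_of_mem hbdd hx hy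

lemma convex_setOf_det2_nonneg (u q : ℝ²) : Convex ℝ {x | 0 ≤ det2 u (x - q)} := by
  simpa only [det2_sub_right, sub_nonneg] using
    convex_halfSpace_ge (isLinearMap_det2 u) (det2 u q)

lemma closedBall_subset_setOf_det2_nonneg_iff {u q p : ℝ²} {ρ : ℝ} (hρ : 0 ≤ ρ) :
    closedBall p ρ ⊆ {x | 0 ≤ det2 u (x - q)} ↔ ρ * ‖u‖ ≤ det2 u (p - q) := by
  constructor
  · intro h
    rcases (norm_nonneg u).eq_or_lt with hu | hu
    · simp [norm_eq_zero.1 hu.symm, det2]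
    -- the point of the ball closest to the line `q + ℝ • u`
    have hy : p - (ρ / ‖u‖) • perp u ∈ closedBall p ρ := by
      rw [mem_closedBall, dist_eq_norm, sub_sub_cancel_left, norm_neg, norm_smul, norm_perp,
        Real.norm_of_nonneg (by positivity), div_mul_cancel₀ _ hu.ne']
    have := h hy
    rw [mem_ofPred_eq, sub_right_comm, det2_sub_right, det2_smul_right, det2_perp] at this
    field_simp at this
    linarith
  · intro h x hx
    have hxp : |det2 u (x - p)| ≤ ‖u‖ * ρ :=
      (abs_det2_le u _).trans (by gcongr; rwa [← dist_eq_norm])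
    rw [mem_ofPred_eq, ← sub_add_sub_cancel x p q, det2_add_right]
    linarith [neg_abs_le (det2 u (x - p))]

lemma convexHull_triple_subset_setOf_det2_nonneg {a b c : ℝ²} (h : 0 ≤ det2 (b - a) (c - a)) :
    convexHull ℝ {a, b, c} ⊆ {x | 0 ≤ det2 (b - a) (x - a)} := by
  refine convexHull_min ?_ (convex_setOf_det2_nonneg _ _)
  simp only [insert_subset_iff, singleton_subset_iff, mem_ofPred_eq, sub_self, det2_self, h,
    and_true]
  simp [det2]

lemma mem_convexHull_triple {a b c : ℝ²} {α β γ : ℝ} (hα : 0 ≤ α) (hβ : 0 ≤ β) (hγ : 0 ≤ γ)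
    (h : α + β + γ = 1) : α • a + β • b + γ • c ∈ convexHull ℝ {a, b, c} := by
  have := (convex_convexHull ℝ ({a, b, c} : Set ℝ²)).sum_mem (t := Finset.univ)
    (w := ![α, β, γ]) (z := ![a, b, c]) (fun i _ => by fin_cases i <;> simpa)
    (by simpa [Fin.sum_univ_three] using h)
    (fun i _ => subset_convexHull ℝ _ (by fin_cases i <;> simp))
  simpa [Fin.sum_univ_three] using this

lemma mem_convexHull_triple_iff {a b c : ℝ²} (h : 0 < det2 (b - a) (c - a)) {x : ℝ²} :
    x ∈ convexHull ℝ {a, b, c} ↔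
      0 ≤ det2 (b - a) (x - a) ∧ 0 ≤ det2 (c - b) (x - b) ∧ 0 ≤ det2 (a - c) (x - c) := by
  constructor
  · intro hx
    refine ⟨convexHull_triple_subset_setOf_det2_nonneg h.le hx, ?_, ?_⟩
    · refine convexHull_triple_subset_setOf_det2_nonneg (c := a)
        (det2_sub_rotate a b c ▸ h.le) ?_
      rwa [Set.pair_comm c a, Set.insert_comm b a]
    · refine convexHull_triple_subset_setOf_det2_nonneg (c := b)
        ((det2_sub_rotate b c a).trans (det2_sub_rotate a b c) ▸ h.le) ?_
      rwa [Set.insert_comm c a, Set.pair_comm c b]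
  · rintro ⟨h₃, h₁, h₂⟩
    -- the barycentric coordinates of `x` are ratios of oriented areas
    have hx : x = (det2 (c - b) (x - b) / det2 (b - a) (c - a)) • a +
        (det2 (a - c) (x - c) / det2 (b - a) (c - a)) • b +
        (det2 (b - a) (x - a) / det2 (b - a) (c - a)) • c := by
      simp only [div_eq_inv_mul, mul_smul, ← smul_add, ← det2_smul_eq_add,
        inv_smul_smul₀ h.ne']
    rw [hx]
    refine mem_convexHull_triple (by positivity) (by positivity) (by positivity) ?_
    rw [← add_div, ← add_div, div_eq_one_iff_eq h.ne', ← det2_add_det2_add_det2 a b c x]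
    ring

lemma closedBall_subset_convexHull_triple_iff {a b c p : ℝ²} {ρ : ℝ}
    (h : 0 < det2 (b - a) (c - a)) (hρ : 0 ≤ ρ) :
    closedBall p ρ ⊆ convexHull ℝ {a, b, c} ↔
      ρ * dist b a ≤ det2 (b - a) (p - a) ∧ ρ * dist c b ≤ det2 (c - b) (p - b) ∧
        ρ * dist a c ≤ det2 (a - c) (p - c) := by
  have hT : convexHull ℝ {a, b, c} = {x | 0 ≤ det2 (b - a) (x - a)} ∩
      ({x | 0 ≤ det2 (c - b) (x - b)} ∩ {x | 0 ≤ det2 (a - c) (x - c)}) :=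
    Set.ext fun x => mem_convexHull_triple_iff h
  simp only [hT, subset_inter_iff, closedBall_subset_setOf_det2_nonneg_iff hρ, dist_eq_norm]

lemma inradius_convexHull_triple {a b c : ℝ²} (h : det2 (b - a) (c - a) ≠ 0) :
    inradius (convexHull ℝ {a, b, c}) =
      |det2 (b - a) (c - a)| / (dist a b + dist a c + dist b c) := by
  wlog hpos : 0 < det2 (b - a) (c - a) generalizing b c
  · have := this (b := c) (c := b) (by rwa [det2_swap, neg_ne_zero])
      (by rw [det2_swap]; exact neg_pos.2 (lt_of_le_of_ne (not_lt.1 hpos) h))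
    rw [Set.pair_comm, det2_swap, abs_neg, dist_comm c b] at this
    rw [this]
    congr 1
    ring
  set Δ := det2 (b - a) (c - a)
  set P := dist a b + dist a c + dist b c with hP_def
  have hab : a ≠ b := by rintro rfl; simp [Δ, det2] at h
  have hP : 0 < P := by have := dist_pos.2 hab; positivity
  have hw : ∀ {x y z : ℝ}, x + y + z = P → x / P + y / P + z / P = 1 := fun hxyz => by
    rw [← add_div, ← add_div, hxyz, div_self hP.ne']
  rw [abs_of_pos hpos]
  refine IsGreatest.csSup_eq ⟨⟨by positivity, ?_⟩, ?_⟩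
  · -- the incenter: barycentric weights proportional to the opposite side lengths
    refine ⟨(dist b c / P) • a + (dist a c / P) • b + (dist a b / P) • c,
      (closedBall_subset_convexHull_triple_iff hpos (by positivity)).2 ⟨?_, ?_, ?_⟩⟩
    · rw [det2_sub_eq_mul (hw (by ring)) rfl, dist_comm]
      exact le_of_eq (by ring)
    · rw [det2_sub_eq_mul (a := b) (b := c) (c := a) (α := dist a c / P) (β := dist a b / P)
        (γ := dist b c / P) (hw (by ring)) (by module), det2_sub_rotate, dist_comm]
      exact le_of_eq (by ring)
    · rw [det2_sub_eq_mul (a := c) (b := a) (c := b) (α := dist a b / P) (β := dist b c / P)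
        (γ := dist a c / P) (hw (by ring)) (by module), det2_sub_rotate, det2_sub_rotate]
      exact le_of_eq (by ring)
  · rintro ρ ⟨hρ, p, hp⟩
    obtain ⟨h₁, h₂, h₃⟩ := (closedBall_subset_convexHull_triple_iff hpos hρ).1 hp
    rw [le_div_iff₀ hP, hP_def]
    have := det2_add_det2_add_det2 a b c p
    rw [dist_comm b a] at h₁
    rw [dist_comm c b] at h₂
    linarith

lemma exists_mem_convexHull_dist_eq {a b c : ℝ²} (h : det2 (b - a) (c - a) ≠ 0)
    (hA : 0 ≤ ⟪b - a, c - a⟫) (hB : 0 ≤ ⟪a - b, c - b⟫) (hC : 0 ≤ ⟪a - c, b - c⟫) :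
    ∃ O ∈ convexHull ℝ {a, b, c}, ∀ v ∈ ({a, b, c} : Set ℝ²),
      dist v O = dist a b * dist a c * dist b c / (2 * |det2 (b - a) (c - a)|) := by
  set U := ‖b - a‖ ^ 2
  set V := ‖c - a‖ ^ 2
  set M := ⟪b - a, c - a⟫
  set d := det2 (b - a) (c - a) ^ 2 with hd_def
  have hd : d = U * V - M ^ 2 := by rw [hd_def, ← det2_sq_add_inner_sq]; ring
  have hd0 : 0 < d := by positivity
  have hW : ‖c - b‖ ^ 2 = U + V - 2 * M := by
    rw [← sub_sub_sub_cancel_right c b a, norm_sub_sq_real, real_inner_comm]; ring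
  have hUM : 0 ≤ U - M := by rwa [inner_sub_sub_left_eq] at hB
  have hVM : 0 ≤ V - M := by rwa [inner_sub_sub_left_eq, real_inner_comm] at hC
  -- barycentric weights of the circumcenter; they are nonnegative because no angle is obtuse
  set β := V * (U - M) / (2 * d) with hβ
  set γ := U * (V - M) / (2 * d) with hγ
  have hα : 1 - β - γ = M * (U + V - 2 * M) / (2 * d) := by
    rw [hβ, hγ]; field_simp; rw [hd]; ring
  set O := a + (β • (b - a) + γ • (c - a))
  have hOa : O - a = β • (b - a) + γ • (c - a) := add_sub_cancel_left _ _
  have hOb : 2 * ⟪O - a, b - a⟫ = U := by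
    rw [hOa, inner_add_left, real_inner_smul_left, real_inner_smul_left,
      real_inner_self_eq_norm_sq, real_inner_comm, hβ, hγ]
    field_simp; rw [hd]; ring
  have hOc : 2 * ⟪O - a, c - a⟫ = V := by
    rw [hOa, inner_add_left, real_inner_smul_left, real_inner_smul_left,
      real_inner_self_eq_norm_sq, hβ, hγ]
    field_simp; rw [hd]; ring
  have hOa2 : dist a O ^ 2 = U * V * ‖c - b‖ ^ 2 / (4 * d) := by
    have hOO : ⟪O - a, O - a⟫ = β * (U / 2) + γ * (V / 2) := by
      nth_rewrite 2 [hOa]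
      rw [inner_add_right, real_inner_smul_right, real_inner_smul_right]
      linear_combination (β / 2) * hOb + (γ / 2) * hOc
    rw [dist_comm, dist_eq_norm, ← real_inner_self_eq_norm_sq, hOO, hW, hβ, hγ]
    field_simp
    ring
  have hOaR : dist a O = dist a b * dist a c * dist b c / (2 * |det2 (b - a) (c - a)|) := by
    rw [← sq_eq_sq₀ dist_nonneg (by positivity), hOa2, div_pow, mul_pow, mul_pow, mul_pow,
      sq_abs, dist_comm a b, dist_comm a c, dist_comm b c, dist_eq_norm, dist_eq_norm,
      dist_eq_norm]
    ring
  have hOmem : O ∈ convexHull ℝ {a, b, c} := by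
    have := mem_convexHull_triple (a := a) (b := b) (c := c) (α := 1 - β - γ) (β := β) (γ := γ)
      (by rw [hα, ← hW]; positivity) (by positivity) (by positivity) (by ring)
    convert this using 1
    module
  refine ⟨O, hOmem, ?_⟩
  simp only [mem_insert_iff, mem_singleton_iff, forall_eq_or_imp, forall_eq]
  exact ⟨hOaR, dist_eq_of_two_mul_inner_eq hOb ▸ hOaR, dist_eq_of_two_mul_inner_eq hOc ▸ hOaR⟩

lemma det2_ne_zero_of_affineIndependent {a b c : ℝ²} (h : AffineIndependent ℝ ![a, b, c]) :
    det2 (b - a) (c - a) ≠ 0 := by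
  rw [affineIndependent_iff_linearIndependent_vsub ℝ _ (0 : Fin 3),
    ← linearIndependent_equiv (finSuccAboveEquiv (0 : Fin 3))] at h
  have hrows : LinearIndependent ℝ
      (Matrix.of ![WithLp.ofLp (b - a), WithLp.ofLp (c - a)]).row := by
    convert h.map' (WithLp.linearEquiv 2 ℝ (Fin 2 → ℝ)).toLinearMap (LinearEquiv.ker _) using 1
    · ext i : 1
      fin_cases i <;> rfl
    all_goals rfl
  have := Matrix.linearIndependent_rows_iff_isUnit.1 hrows
  rw [Matrix.isUnit_iff_isUnit_det, Matrix.det_fin_two, isUnit_iff_ne_zero] at this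
  simpa [det2] using this

lemma four_mul_det2_sq (a b c : ℝ²) :
    4 * det2 (b - a) (c - a) ^ 2 =
      2 * (dist a b ^ 2 * dist a c ^ 2 + dist a c ^ 2 * dist b c ^ 2 +
        dist b c ^ 2 * dist a b ^ 2) - (dist a b ^ 4 + dist a c ^ 4 + dist b c ^ 4) := by
  have hbc : ‖c - b‖ ^ 2 = ‖b - a‖ ^ 2 + ‖c - a‖ ^ 2 - 2 * ⟪b - a, c - a⟫ := by
    rw [← sub_sub_sub_cancel_right c b a, norm_sub_sq_real, real_inner_comm]; ring
  rw [dist_comm a b, dist_comm a c, dist_comm b c, dist_eq_norm, dist_eq_norm, dist_eq_norm]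
  linear_combination 4 * det2_sq_add_inner_sq (b - a) (c - a) +
    (‖c - b‖ ^ 2 - ‖b - a‖ ^ 2 - ‖c - a‖ ^ 2 - 2 * ⟪b - a, c - a⟫) * hbc

lemma triangle_identity_of_sq_le_add_sq {p q r Δ : ℝ} (hp : 0 < p) (hq : 0 < q) (hr : 0 < r)
    (hΔ : 0 < Δ) (heron : 4 * Δ ^ 2 = 4 * q ^ 2 * r ^ 2 - (q ^ 2 + r ^ 2 - p ^ 2) ^ 2)
    (hp2 : p ^ 2 ≤ q ^ 2 + r ^ 2) :
    Δ = 2 * (Δ / (p + q + r)) * (p + 2 * (Δ / (p + q + r)) * (p * q * r / (2 * Δ)) / p *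
      (1 + √(1 - (p / (2 * (p * q * r / (2 * Δ)))) ^ 2))) := by
  -- `√(1 - (p / 2R)²)` is the cosine of the angle opposite `p`
  have hcos : √(1 - (p / (2 * (p * q * r / (2 * Δ)))) ^ 2) =
      (q ^ 2 + r ^ 2 - p ^ 2) / (2 * q * r) := by
    have hsq : 1 - (p / (2 * (p * q * r / (2 * Δ)))) ^ 2 =
        ((q ^ 2 + r ^ 2 - p ^ 2) / (2 * q * r)) ^ 2 := by
      field_simp
      linear_combination (-1 : ℝ) * heron
    rw [hsq, Real.sqrt_sq (by have := sub_nonneg.2 hp2; positivity)]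
  rw [hcos]
  field_simp
  ring

lemma acute_triangle_identity {p q r Δ : ℝ} (hp : 0 < p) (hq : 0 < q) (hr : 0 < r) (hΔ : 0 < Δ)
    (heron : 4 * Δ ^ 2 =
      2 * (p ^ 2 * q ^ 2 + q ^ 2 * r ^ 2 + r ^ 2 * p ^ 2) - (p ^ 4 + q ^ 4 + r ^ 4))
    (hp2 : p ^ 2 ≤ q ^ 2 + r ^ 2) (hq2 : q ^ 2 ≤ p ^ 2 + r ^ 2) (hr2 : r ^ 2 ≤ p ^ 2 + q ^ 2) :
    Δ / max (max p q) r * max (max p q) r =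
      2 * (Δ / (p + q + r)) * (max (max p q) r +
        2 * (Δ / (p + q + r)) * (p * q * r / (2 * Δ)) / max (max p q) r *
          (1 + √(1 - (max (max p q) r / (2 * (p * q * r / (2 * Δ)))) ^ 2))) := by
  rw [div_mul_cancel₀ _ (hr.trans_le (le_max_right _ _)).ne']
  rcases max_choice (max p q) r with h | h <;> rw [h]
  · rcases max_choice p q with h' | h' <;> rw [h']
    · exact triangle_identity_of_sq_le_add_sq hp hq hr hΔ (by linear_combination heron) hp2
    · have := triangle_identity_of_sq_le_add_sq hq hp hr hΔ (by linear_combination heron) hq2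
      rwa [add_comm q p, mul_comm q p] at this
  · have := triangle_identity_of_sq_le_add_sq hr hp hq hΔ (by linear_combination heron) hr2
    rwa [show r + p + q = p + q + r by ring, show r * p * q = p * q * r by ring] at this

theorem acute_triangle_width_eq (a b c : EuclideanSpace ℝ (Fin 2))
    (hindep : AffineIndependent ℝ ![a, b, c])
    (hA : 0 ≤ (inner ℝ (b - a) (c - a) : ℝ))
    (hB : 0 ≤ (inner ℝ (a - b) (c - b) : ℝ))
    (hC : 0 ≤ (inner ℝ (a - c) (b - c) : ℝ)) :
    width (convexHull ℝ ({a, b, c} : Set (EuclideanSpace ℝ (Fin 2)))) *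
        sDiam (convexHull ℝ ({a, b, c} : Set (EuclideanSpace ℝ (Fin 2)))) =
      2 * inradius (convexHull ℝ ({a, b, c} : Set (EuclideanSpace ℝ (Fin 2)))) *
        (sDiam (convexHull ℝ ({a, b, c} : Set (EuclideanSpace ℝ (Fin 2)))) +
          (2 * inradius (convexHull ℝ ({a, b, c} : Set (EuclideanSpace ℝ (Fin 2)))) *
              circumradius (convexHull ℝ ({a, b, c} : Set (EuclideanSpace ℝ (Fin 2)))) /
              sDiam (convexHull ℝ ({a, b, c} : Set (EuclideanSpace ℝ (Fin 2))))) *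
            (1 + Real.sqrt (1 -
              (sDiam (convexHull ℝ ({a, b, c} : Set (EuclideanSpace ℝ (Fin 2)))) /
                (2 * circumradius (convexHull ℝ
                  ({a, b, c} : Set (EuclideanSpace ℝ (Fin 2)))))) ^ 2))) := by
  have hΔ := det2_ne_zero_of_affineIndependent hindep
  have hside : ∀ {i j : Fin 3}, i ≠ j → 0 < dist (![a, b, c] i) (![a, b, c] j) :=
    fun hij => dist_pos.2 (hindep.injective.ne hij)
  obtain ⟨O, hO, hOR⟩ := exists_mem_convexHull_dist_eq hΔ hA hB hC
  rw [width_convexHull_triple hΔ, inradius_convexHull_triple hΔ,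
    circumradius_convexHull_eq (insert_nonempty _ _) hO hOR, sDiam, convexHull_diam, diam_triple]
  refine acute_triangle_identity (hside (i := 0) (j := 1) (by decide))
    (hside (i := 0) (j := 2) (by decide)) (hside (i := 1) (j := 2) (by decide)) (abs_pos.2 hΔ)
    (by rw [sq_abs]; exact four_mul_det2_sq a b c) ?_ ?_ ?_
  · exact (dist_sq_le_of_inner_nonneg hC).trans_eq (by rw [dist_comm c a, dist_comm c b])
  · exact (dist_sq_le_of_inner_nonneg hB).trans_eq (by rw [dist_comm b a])
  · exact dist_sq_le_of_inner_nonneg hA
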